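/- Let N ≥ 2 and let x ∈ ℂ^N satisfy x[1] ≠ 0. Then the system of 4N−4 linear equations trace(ψ_{m,n} ψ_{m,n}* · X) = |⟨x, ψ_{m,n}⟩|² (m = 1,…,4; n = 1,…,N−1) has a unique solution in the cone of Hermitian positive semidefinite N×N matrices, namely X = x x*. (Corollary 1, part Ψ: exact recovery of x, up to a unimodular constant, by the PhaseLift semidefinite program from the 4N−4 deterministic Ψ-measurements.) -/

import Mathlib

open Complex Matrix MeasureTheory

noncomputable section

/-- α = √((1 − 1/√3)/2) -/
def alph : ℂ := (Real.sqrt ((1 - 1/Real.sqrt 3)/2) : ℝ)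

/-- β = e^{i5π/4}·√((1 + 1/√3)/2) -/
def beta : ℂ := Complex.exp (Complex.I * (5 * (Real.pi : ℂ) / 4)) *
  (Real.sqrt ((1 + 1/Real.sqrt 3)/2) : ℝ)

/-- the four frame vectors a₁ = (α,β), a₂ = (β,α), a₃ = (α,−β), a₄ = (−β,α) in ℂ² -/
def coef : Fin 4 → Fin 2 → ℂ := ![![alph, beta], ![beta, alph], ![alph, -beta], ![-beta, alph]]

/-- inner product ⟨x,y⟩ = Σ x[n]·conj(y[n]) -/
def inn {N : ℕ} (x y : Fin N → ℂ) : ℂ := ∑ i, x i * (starRingEnd ℂ) (y i)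

/-- Euclidean norm ‖x‖ = √⟨x,x⟩ -/
def nrm {N : ℕ} (x : Fin N → ℂ) : ℝ := Real.sqrt (inn x x).re

/-- outer product x y* -/
def outer {N : ℕ} (x y : Fin N → ℂ) : Matrix (Fin N) (Fin N) ℂ :=
  fun i j => x i * (starRingEnd ℂ) (y j)

/-- measurement vectors φ_{m,n} (0-based n: nonzero entries at positions n and n+1) -/
def phiv (N : ℕ) (m : Fin 4) (n : ℕ) : Fin N → ℂ :=
  fun i => if (i : ℕ) = n then coef m 0 else if (i : ℕ) = n + 1 then coef m 1 else 0

/-- measurement vectors ψ_{m,n} (0-based n: nonzero entries at positions 0 and n+1) -/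
def psiv (N : ℕ) (m : Fin 4) (n : ℕ) : Fin N → ℂ :=
  fun i => if (i : ℕ) = 0 then coef m 0 else if (i : ℕ) = n + 1 then coef m 1 else 0

/-- Hilbert–Schmidt inner product ⟨X,Y⟩ = trace(Y*X) -/
def hs {N : ℕ} (X Y : Matrix (Fin N) (Fin N) ℂ) : ℂ := Matrix.trace (Yᴴ * X)

/-- Frobenius (Hilbert–Schmidt) norm -/
def frob {N : ℕ} (X : Matrix (Fin N) (Fin N) ℂ) : ℝ := Real.sqrt (Matrix.trace (Xᴴ * X)).re

/-- spectral norm (largest singular value) -/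
def specNorm {N : ℕ} (A : Matrix (Fin N) (Fin N) ℂ) : ℝ :=
  sSup {r : ℝ | ∃ v : Fin N → ℂ, nrm v ≤ 1 ∧ r = nrm (A.mulVec v)}
open scoped ComplexOrder

/-! Put `D = X - x x*`. The measurement by `ψ_{m,n}` only sees the principal `2 × 2` block of `D` on
the indices `{1, n+1}`, and the four vectors `(α, β), (β, α), (α, -β), (-β, α)` determine any
`2 × 2` matrix from its quadratic form because `|α| ≠ |β|` and `(ᾱβ)² ≠ (β̄α)²`. So `D` vanishes on
the first column and on the diagonal. As `X ⪰ 0` and `x₁ ≠ 0`, this first column makes `D` a Schur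
complement of `X`, hence `D ⪰ 0`; a positive semidefinite matrix with zero diagonal is zero. -/

namespace Matrix

variable {n 𝕜 : Type*} [Fintype n] [RCLike 𝕜]

-- With `u = v - (x* v / x* e) • e` we get `x* u = 0` and `D u = D v`, so `v* D v = u* X u ≥ 0`.
theorem PosSemidef.sub_vecMulVec_self_star {X : Matrix n n 𝕜} (hX : X.PosSemidef)
    {x e : n → 𝕜} (he : (X - vecMulVec x (star x)) *ᵥ e = 0) (hxe : star x ⬝ᵥ e ≠ 0) :
    (X - vecMulVec x (star x)).PosSemidef := by
  set D := X - vecMulVec x (star x)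
  have hD : D.IsHermitian := hX.isHermitian.sub (posSemidef_vecMulVec_self_star x).isHermitian
  refine PosSemidef.of_dotProduct_mulVec_nonneg hD fun v => ?_
  set u := v - ((star x ⬝ᵥ v) / (star x ⬝ᵥ e)) • e
  have hxu : star x ⬝ᵥ u = 0 := by
    simp only [u, dotProduct_sub, dotProduct_smul, smul_eq_mul, div_mul_cancel₀ _ hxe, sub_self]
  have hDu : D *ᵥ u = D *ᵥ v := by simp [u, mulVec_sub, mulVec_smul, he]
  have heD : star e ⬝ᵥ D *ᵥ v = 0 := by
    rw [dotProduct_mulVec, ← hD.eq, ← star_mulVec, he, star_zero, zero_dotProduct]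
  have hXu : X *ᵥ u = D *ᵥ u := by
    simp [D, sub_mulVec, vecMulVec_mulVec, hxu]
  calc 0 ≤ star u ⬝ᵥ X *ᵥ u := hX.dotProduct_mulVec_nonneg u
    _ = star v ⬝ᵥ D *ᵥ v := by
      simp [hXu, hDu, u, star_sub, star_smul, sub_dotProduct, smul_dotProduct, heD]

theorem PosSemidef.eq_vecMulVec_self_star {X : Matrix n n 𝕜} (hX : X.PosSemidef)
    {x : n → 𝕜} {i₀ : n} (hx : x i₀ ≠ 0) (hcol : ∀ i, X i i₀ = x i * star (x i₀))
    (hdiag : ∀ i, X i i = x i * star (x i)) :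
    X = vecMulVec x (star x) := by
  classical
  have hD := hX.sub_vecMulVec_self_star (x := x) (e := Pi.single i₀ 1)
    (by ext i; simp [hcol, vecMulVec_apply])
    (by simpa using hx)
  refine sub_eq_zero.mp (hD.trace_eq_zero_iff.mp (Finset.sum_eq_zero fun i _ => ?_))
  simp [hdiag, vecMulVec_apply]

theorem star_dotProduct_mulVec_single_add_single [DecidableEq n] (X : Matrix n n 𝕜) (i j : n)
    (a : Fin 2 → 𝕜) :
    star (Pi.single i (a 0) + Pi.single j (a 1)) ⬝ᵥ X *ᵥ (Pi.single i (a 0) + Pi.single j (a 1))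
      = star a ⬝ᵥ X.submatrix ![i, j] ![i, j] *ᵥ a := by
  simp only [star_add, ← Pi.single_star, mulVec_add, add_dotProduct, single_dotProduct,
    Pi.add_apply, mulVec_single, Pi.smul_apply, op_smul_eq_mul, col_apply]
  simp [dotProduct, mulVec, Fin.sum_univ_two]

end Matrix

open scoped ComplexConjugate Real

def quadFrame (a b : ℂ) : Fin 4 → Fin 2 → ℂ := ![![a, b], ![b, a], ![a, -b], ![-b, a]]

theorem eq_zero_of_quadFrame {a b : ℂ} (hnorm : normSq a ≠ normSq b)
    (hphase : (conj a * b) ^ 2 ≠ (conj b * a) ^ 2) {Y : Matrix (Fin 2) (Fin 2) ℂ}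
    (hY : ∀ m, star (quadFrame a b m) ⬝ᵥ Y *ᵥ quadFrame a b m = 0) : Y = 0 := by
  have E0 := hY 0
  have E1 := hY 1
  have E2 := hY 2
  have E3 := hY 3
  simp only [quadFrame, dotProduct, mulVec, Fin.sum_univ_two, Pi.star_apply, RCLike.star_def,
    cons_val_zero, cons_val_one, cons_val', cons_val_fin_one, cons_val, mul_neg, map_neg,
    neg_mul] at E0 E1 E2 E3
  -- sums of the equations for `(a, ±b)` and `(b, ±a)` involve only the diagonal, differences only
  -- the off-diagonal entries
  set A := conj a * a
  set B := conj b * b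
  set p := conj a * b
  set q := conj b * a
  have hAB : A ^ 2 - B ^ 2 ≠ 0 := by
    simp only [A, B, sub_ne_zero, ← normSq_eq_conj_mul_self]
    exact_mod_cast (sq_eq_sq₀ (normSq_nonneg a) (normSq_nonneg b)).not.mpr hnorm
  have hpq : p ^ 2 - q ^ 2 ≠ 0 := sub_ne_zero.mpr hphase
  have h00 : (A ^ 2 - B ^ 2) * Y 0 0 = 0 := by
    linear_combination (A / 2) * (E0 + E2) - (B / 2) * (E1 + E3)
  have h11 : (A ^ 2 - B ^ 2) * Y 1 1 = 0 := by
    linear_combination (A / 2) * (E1 + E3) - (B / 2) * (E0 + E2)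
  have h01 : (p ^ 2 - q ^ 2) * Y 0 1 = 0 := by
    linear_combination (p / 2) * (E0 - E2) - (q / 2) * (E1 - E3)
  have h10 : (p ^ 2 - q ^ 2) * Y 1 0 = 0 := by
    linear_combination (p / 2) * (E1 - E3) - (q / 2) * (E0 - E2)
  ext i j
  fin_cases i <;> fin_cases j
  · exact (mul_eq_zero.mp h00).resolve_left hAB
  · exact (mul_eq_zero.mp h01).resolve_left hpq
  · exact (mul_eq_zero.mp h10).resolve_left hpq
  · exact (mul_eq_zero.mp h11).resolve_left hAB

lemma one_div_sqrt_three_lt_one : 1 / √3 < 1 := by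
  rw [div_lt_one (by positivity)]
  exact Real.lt_sqrt_of_sq_lt (by norm_num)

lemma conj_alph : conj alph = alph := conj_ofReal _

lemma normSq_alph : normSq alph = (1 - 1 / √3) / 2 := by
  rw [alph, normSq_ofReal, Real.mul_self_sqrt (by linarith [one_div_sqrt_three_lt_one])]

lemma normSq_beta : normSq beta = (1 + 1 / √3) / 2 := by
  have hθ : I * (5 * (π : ℂ) / 4) = ((5 * π / 4 : ℝ) : ℂ) * I := by push_cast; ring
  rw [beta, hθ, normSq_mul, normSq_eq_norm_sq, norm_exp_ofReal_mul_I, normSq_ofReal,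
    Real.mul_self_sqrt (by positivity), one_pow, one_mul]

lemma beta_sq : beta ^ 2 = I * ((1 + 1 / √3) / 2 : ℝ) := by
  have hexp : exp (I * (5 * (π : ℂ) / 4)) ^ 2 = I := by
    rw [← exp_nat_mul, show ((2 : ℕ) : ℂ) * (I * (5 * π / 4)) = π / 2 * I + 2 * π * I by
      push_cast; ring, exp_add, exp_two_pi_mul_I, mul_one, exp_pi_div_two_mul_I]
  rw [beta, mul_pow, hexp, ← ofReal_pow, Real.sq_sqrt (by positivity)]

lemma normSq_alph_ne_normSq_beta : normSq alph ≠ normSq beta := by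
  rw [normSq_alph, normSq_beta]
  have : 0 < 1 / √3 := by positivity
  linarith

-- `(ᾱβ)² - (β̄α)² = α² (β² - conj β²)` and `β²` is purely imaginary.
lemma conj_alph_mul_beta_sq_ne : (conj alph * beta) ^ 2 ≠ (conj beta * alph) ^ 2 := by
  have hα : alph ≠ 0 := by
    rw [← normSq_pos, normSq_alph]; linarith [one_div_sqrt_three_lt_one]
  have hc : (((1 + 1 / √3) / 2 : ℝ) : ℂ) ≠ 0 := ofReal_ne_zero.mpr (by positivity)
  rw [← sub_ne_zero, conj_alph, mul_pow, mul_pow, ← map_pow, beta_sq, map_mul, conj_I, conj_ofReal]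
  generalize (((1 + 1 / √3) / 2 : ℝ) : ℂ) = c at hc ⊢
  rw [show alph ^ 2 * (I * c) - -I * c * alph ^ 2 = 2 * I * c * alph ^ 2 by ring]
  exact mul_ne_zero (mul_ne_zero (mul_ne_zero two_ne_zero I_ne_zero) hc) (pow_ne_zero 2 hα)

lemma coef_eq_quadFrame : coef = quadFrame alph beta := rfl

lemma outer_self_eq_vecMulVec {N : ℕ} (x : Fin N → ℂ) : outer x x = vecMulVec x (star x) := rfl

lemma trace_outer_self_mul {N : ℕ} (ψ : Fin N → ℂ) (X : Matrix (Fin N) (Fin N) ℂ) :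
    trace (outer ψ ψ * X) = star ψ ⬝ᵥ X *ᵥ ψ := by
  simp only [trace, diag, mul_apply, outer, dotProduct, mulVec, Finset.mul_sum]
  rw [Finset.sum_comm]
  exact Finset.sum_congr rfl fun i _ => Finset.sum_congr rfl fun j _ => by simp; ring

lemma trace_outer_self_mul_outer_self {N : ℕ} (ψ x : Fin N → ℂ) :
    trace (outer ψ ψ * outer x x) = ((‖inn x ψ‖ ^ 2 : ℝ) : ℂ) := by
  have hinn : inn x ψ = star ψ ⬝ᵥ x := by
    simp only [inn, dotProduct, Pi.star_apply, RCLike.star_def, mul_comm]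
  have hinn' : star x ⬝ᵥ ψ = conj (inn x ψ) := by
    simp only [inn, dotProduct, Pi.star_apply, RCLike.star_def, map_sum, map_mul, conj_conj,
      mul_comm]
  rw [trace_outer_self_mul, outer_self_eq_vecMulVec, vecMulVec_mulVec, dotProduct_smul, ← hinn,
    hinn', op_smul_eq_mul, mul_conj, normSq_eq_norm_sq]

lemma psiv_eq_single_add_single {N : ℕ} (m : Fin 4) {n : ℕ} (hn : n + 1 < N) :
    psiv N m n = Pi.single ⟨0, by omega⟩ (coef m 0) + Pi.single ⟨n + 1, hn⟩ (coef m 1) := by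
  ext ⟨i, hi⟩
  rcases i with _ | i
  · simp [psiv]
  · by_cases h : i = n <;> simp [psiv, h]

/-- Corollary 1 (part Ψ): for x ∈ S_Ψ, X = xx* is the unique Hermitian PSD solution
of the 4N−4 linear equations trace(ψ_{m,n} ψ_{m,n}*·X) = |⟨x,ψ_{m,n}⟩|². -/
theorem phaselift_unique_Psi (N : ℕ) (hN : 2 ≤ N) (x : Fin N → ℂ)
    (hx : x ⟨0, by omega⟩ ≠ 0) :
    ((outer x x).PosSemidef ∧
      ∀ (m : Fin 4) (n : ℕ), n + 1 < N →
        Matrix.trace (outer (psiv N m n) (psiv N m n) * outer x x)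
          = ((‖inn x (psiv N m n)‖ ^ 2 : ℝ) : ℂ)) ∧
    (∀ X : Matrix (Fin N) (Fin N) ℂ, X.PosSemidef →
      (∀ (m : Fin 4) (n : ℕ), n + 1 < N →
        Matrix.trace (outer (psiv N m n) (psiv N m n) * X)
          = ((‖inn x (psiv N m n)‖ ^ 2 : ℝ) : ℂ)) →
      X = outer x x) := by
  refine ⟨⟨posSemidef_vecMulVec_self_star x, fun m n _ => trace_outer_self_mul_outer_self _ _⟩,
    fun X hX hmeas => ?_⟩
  set z : Fin N := ⟨0, by omega⟩
  set D := X - outer x x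
  have hblock : ∀ k : Fin N, k ≠ z → D.submatrix ![z, k] ![z, k] = 0 := by
    rintro ⟨_ | n, hk⟩ hkz
    · exact absurd rfl hkz
    refine eq_zero_of_quadFrame normSq_alph_ne_normSq_beta conj_alph_mul_beta_sq_ne fun m => ?_
    rw [← coef_eq_quadFrame, ← star_dotProduct_mulVec_single_add_single,
      ← psiv_eq_single_add_single m hk, ← trace_outer_self_mul, mul_sub, trace_sub, hmeas m n hk,
      trace_outer_self_mul_outer_self, sub_self]
  have hzz : D z z = 0 := by
    simpa using congrFun₂ (hblock ⟨1, hN⟩ (by simp [z, Fin.ext_iff])) 0 0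
  have hD : ∀ i, D i z = 0 ∧ D i i = 0 := by
    intro i
    by_cases hi : i = z
    · subst hi; exact ⟨hzz, hzz⟩
    · exact ⟨by simpa using congrFun₂ (hblock i hi) 1 0, by simpa using congrFun₂ (hblock i hi) 1 1⟩
  exact hX.eq_vecMulVec_self_star hx (fun i => sub_eq_zero.mp (hD i).1)
    (fun i => sub_eq_zero.mp (hD i).2)
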